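/- Let b₁ > b₂ > 0 and μ ≥ 2. If c > b₁ + ((μ-2)/2)·b₂, then the empty (null) graph on μ nodes uniquely maximizes the social welfare W(g) = Σ_j [ d_j(b₁ - c) + Σ_{w : dist(j,w) > 1} b_{dist(j,w)} ], where b_i = b₂ for all i ≥ 2. -/

import Mathlib

/-!
Sending an ordered pair `(j, w)` of distinct mutually reachable nodes to `j` together with the
first edge of a shortest path from `w` to `j` is injective, since along that edge the distance to
`j` drops by one. So with `E` edges and `P` ordered pairs at finite distance at least `2`,
`P + 2E ≤ μE`, and `W(g) = 2E(b₁ - c) + P b₂ ≤ 2E(b₁ - c + (μ - 2)/2 · b₂)`, which is negative as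
soon as `g` has an edge, while `W(∅) = 0`.
-/

/-- Social welfare of a graph. -/
noncomputable def socialWelfare {n : ℕ} (b : ℕ → ℝ) (c : ℝ)
    (G : SimpleGraph (Fin n)) : ℝ := by
  classical
  exact ∑ j, ((G.degree j : ℝ) * (b 1 - c) +
    ∑ w, if 1 < G.dist j w then b (G.dist j w) else 0)

open Finset

namespace SimpleGraph

variable {V : Type*} (G : SimpleGraph V)

lemma exists_adj_dist_add_one {u v : V} (h : 0 < G.dist u v) :
    ∃ x, G.Adj v x ∧ G.dist u x + 1 = G.dist u v := by
  rw [dist_comm] at h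
  obtain ⟨p, hp⟩ := exists_walk_of_dist_ne_zero h.ne'
  cases p with
  | nil => simp at h
  | cons hadj q =>
    refine ⟨_, hadj, ?_⟩
    have htri := hadj.reachable.dist_triangle_left u
    rw [dist_eq_one_iff_adj.2 hadj] at htri
    rw [Walk.length_cons] at hp
    rw [dist_comm, G.dist_comm (u := u)]
    have := G.dist_le q
    omega

variable [Fintype V] [DecidableEq V] [DecidableRel G.Adj]

lemma card_pos_dist_eq (j : V) :
    #{w | 0 < G.dist j w} = #{w | 1 < G.dist j w} + G.degree j := by
  have hnbr : G.neighborFinset j = ({w | G.dist j w = 1} : Finset V) := by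
    ext w; simp
  rw [← card_neighborFinset_eq_degree, hnbr,
    ← card_union_of_disjoint (disjoint_filter.2 fun _ _ ↦ by omega), ← filter_or]
  congr 1
  ext w
  simp only [mem_filter, mem_univ, true_and]
  omega

lemma sum_card_pos_dist_le :
    ∑ j, #{w | 0 < G.dist j w} ≤ Fintype.card V * #G.edgeFinset := by
  choose! next hnext_adj hnext_dist using fun j w (h : 0 < G.dist j w) ↦
    G.exists_adj_dist_add_one h
  rw [← card_sigma, ← card_univ, ← card_product]
  refine card_le_card_of_injOn (fun q ↦ (q.1, s(q.2, next q.1 q.2))) ?_ ?_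
  · rintro ⟨j, w⟩ hq
    simpa using hnext_adj j w (mem_filter.1 (mem_sigma.1 hq).2).2
  · rintro ⟨j, w⟩ hq ⟨j', w'⟩ hq' heq
    obtain ⟨rfl, hs⟩ := Prod.mk.inj heq
    have hd := hnext_dist j w (mem_filter.1 (mem_sigma.1 hq).2).2
    have hd' := hnext_dist j w' (mem_filter.1 (mem_sigma.1 hq').2).2
    rcases Sym2.eq_iff.1 hs with ⟨rfl, -⟩ | ⟨hw, hw'⟩
    · rfl
    · rw [← hw] at hd'
      rw [hw'] at hd
      dsimp only at hd hd'
      omega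

lemma sum_card_one_lt_dist_add_le :
    ∑ j, #{w | 1 < G.dist j w} + 2 * #G.edgeFinset ≤ Fintype.card V * #G.edgeFinset := by
  simpa only [card_pos_dist_eq, sum_add_distrib, sum_degrees_eq_twice_card_edges] using
    G.sum_card_pos_dist_le

end SimpleGraph

section Welfare

variable {n : ℕ} {b : ℕ → ℝ} (c : ℝ)

lemma socialWelfare_bot : socialWelfare b c (⊥ : SimpleGraph (Fin n)) = 0 := by
  simp [socialWelfare]

lemma socialWelfare_eq (hb : ∀ i, 2 ≤ i → b i = b 2) (G : SimpleGraph (Fin n))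
    [DecidableRel G.Adj] :
    socialWelfare b c G =
      2 * #G.edgeFinset * (b 1 - c) + (∑ j, #{w | 1 < G.dist j w} : ℕ) * b 2 := by
  have hfar (j : Fin n) : (∑ w, if 1 < G.dist j w then b (G.dist j w) else 0) =
      #{w | 1 < G.dist j w} * b 2 := by
    rw [← sum_filter, ← nsmul_eq_mul, ← sum_const]
    exact sum_congr rfl fun w hw ↦ hb _ (mem_filter.1 hw).2
  have hdeg : ∑ j, (G.degree j : ℝ) = 2 * #G.edgeFinset := by
    exact_mod_cast G.sum_degrees_eq_twice_card_edges
  unfold socialWelfare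
  simp only [hfar, sum_add_distrib, ← sum_mul]
  push_cast
  congr 2
  -- `socialWelfare` counts degrees with classical decidability instances
  convert hdeg

end Welfare

theorem stmt_6_general (μ : ℕ) (b : ℕ → ℝ) (c : ℝ)
    (h2 : b 2 > 0) (hb : ∀ i, 2 ≤ i → b i = b 2)
    (hc : c > b 1 + (((μ : ℝ) - 2) / 2) * b 2) :
    ∀ G : SimpleGraph (Fin μ), G ≠ ⊥ →
      socialWelfare b c G < socialWelfare b c (⊥ : SimpleGraph (Fin μ)) := by
  classical
  intro G hG
  have hE : (0 : ℝ) < #G.edgeFinset := by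
    exact_mod_cast card_pos.2 (SimpleGraph.edgeFinset_nonempty.2 hG)
  have hpairs : ((∑ j, #{w | 1 < G.dist j w} : ℕ) : ℝ) + 2 * #G.edgeFinset ≤
      μ * #G.edgeFinset := by
    exact_mod_cast (by simpa only [Fintype.card_fin] using G.sum_card_one_lt_dist_add_le)
  rw [socialWelfare_eq c hb, socialWelfare_bot]
  nlinarith [mul_le_mul_of_nonneg_right hpairs h2.le, mul_lt_mul_of_pos_left hc hE]

theorem stmt_6 (μ : ℕ) (hμ : 2 ≤ μ) (b : ℕ → ℝ) (c : ℝ)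
    (h12 : b 1 > b 2) (h2 : b 2 > 0) (hb : ∀ i, 2 ≤ i → b i = b 2)
    (hc : c > b 1 + (((μ : ℝ) - 2) / 2) * b 2) :
    ∀ G : SimpleGraph (Fin μ), G ≠ ⊥ →
      socialWelfare b c G < socialWelfare b c (⊥ : SimpleGraph (Fin μ)) :=
  stmt_6_general μ b c h2 hb hc
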